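/- arXiv:2505.15387 — 2 statements merged into one kernel-verified Lean document; each statement's English description precedes it below -/
import Mathlib

section
/- Let (D,▷) be a rack with |D| > 1, and set M_D = inf{n ≥ 1 : (L_bL_a)^n L_b^{-n}(b) = a for all a, b ∈ D} and N_D = inf{n ≥ 1 : (L_bL_a)^n L_b^{-n}(b) = b for all a, b ∈ D}, with inf ∅ = ∞. Then: (1) if (D,▷) is not a quandle, the derived solution r_▷ has finite order if and only if N_D is finite, in which case o(r_▷) = 2N_D; (2) if (D,▷) is a quandle, r_▷ has finite order if and only if min{M_D, N_D} is finite, and o(r_▷) = 2M_D + 1 when M_D < N_D, while o(r_▷) = 2N_D when N_D < M_D. -/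
section Aux
variable {D : Type*} (L : D → Equiv.Perm D)

/-- `g` conjugates `L` correctly. -/
def LConj (g : Equiv.Perm D) : Prop := ∀ x, L (g x) = g * L x * g⁻¹

lemma lconj_base (hsd : ∀ a b c : D, L a (L b c) = L (L a b) (L a c)) (c : D) : LConj L (L c) := by
  intro x
  ext y
  have h := hsd c x ((L c)⁻¹ y)
  rw [show (L c) ((L c)⁻¹ y) = y from Equiv.Perm.eq_inv_iff_eq.mp rfl] at h
  simp only [Equiv.Perm.mul_apply]
  rw [← h]

lemma lconj_mul {g h : Equiv.Perm D} (hg : LConj L g) (hh : LConj L h) :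
    LConj L (g * h) := by
  intro x
  have : (g * h) x = g (h x) := rfl
  rw [this, hg, hh]
  group

lemma lconj_inv {g : Equiv.Perm D} (hg : LConj L g) : LConj L g⁻¹ := by
  intro x
  have := hg (g⁻¹ x)
  rw [show g (g⁻¹ x) = x from Equiv.Perm.eq_inv_iff_eq.mp rfl] at this
  rw [this]
  group

lemma lconj_one : LConj L 1 := by intro x; simp

lemma lconj_pow {g : Equiv.Perm D} (hg : LConj L g) (n : ℕ) : LConj L (g ^ n) := by
  induction n with
  | zero => simpa using lconj_one L
  | succ k ih => rw [pow_succ]; exact lconj_mul L ih hg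

end Aux

section Key
variable {D : Type*} (L : D → Equiv.Perm D)
  (hsd : ∀ a b c : D, L a (L b c) = L (L a b) (L a c))
  (R : Equiv.Perm (D × D)) (hR : ∀ a b : D, R (a, b) = (b, L b a))

include hsd hR in
lemma key_formula (n : ℕ) (a b : D) :
    (R ^ (2 * n)) (a, b) =
      (((L b * L a) ^ n * ((L a)⁻¹) ^ n) a, ((L b * L a) ^ n * ((L b)⁻¹) ^ n) b) := by
  induction n with
  | zero => simp
  | succ n ih =>
    have cb : LConj L ((L b * L a) ^ n * ((L b)⁻¹) ^ n) :=
      lconj_mul L (lconj_pow L (lconj_mul L (lconj_base L hsd b) (lconj_base L hsd a)) n)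
        (lconj_pow L (lconj_inv L (lconj_base L hsd b)) n)
    have ca' : LConj L ((L b * L a) ^ (n + 1) * ((L a)⁻¹) ^ (n + 1)) :=
      lconj_mul L (lconj_pow L (lconj_mul L (lconj_base L hsd b) (lconj_base L hsd a)) (n+1))
        (lconj_pow L (lconj_inv L (lconj_base L hsd a)) (n+1))
    set ga := (L b * L a) ^ n * ((L a)⁻¹) ^ n with hga
    set gb := (L b * L a) ^ n * ((L b)⁻¹) ^ n with hgb
    have h2 : 2 * (n + 1) = (2 * n) + 1 + 1 := by ring
    have step : (R ^ (2 * (n + 1))) (a, b) = R (R ((R ^ (2 * n)) (a, b))) := by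
      rw [h2, pow_succ', pow_succ']
      rfl
    rw [step, ih, hR, hR]
    have e1 : L (gb b) (ga a) = ((L b * L a) ^ (n + 1) * ((L a)⁻¹) ^ (n + 1)) a := by
      rw [cb b]
      have : (gb * L b * gb⁻¹) (ga a) = (gb * L b * gb⁻¹ * ga) a := rfl
      rw [this]
      congr 1
      rw [hga, hgb, pow_succ (L b * L a) n, pow_succ' ((L a)⁻¹) n]
      group
    rw [e1]
    have e2 : L (((L b * L a) ^ (n + 1) * ((L a)⁻¹) ^ (n + 1)) a) (gb b)
        = ((L b * L a) ^ (n + 1) * ((L b)⁻¹) ^ (n + 1)) b := by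
      rw [ca' a]
      have : ((L b * L a) ^ (n + 1) * ((L a)⁻¹) ^ (n + 1) * L a *
          ((L b * L a) ^ (n + 1) * ((L a)⁻¹) ^ (n + 1))⁻¹) (gb b)
          = ((L b * L a) ^ (n + 1) * ((L a)⁻¹) ^ (n + 1) * L a *
          ((L b * L a) ^ (n + 1) * ((L a)⁻¹) ^ (n + 1))⁻¹ * gb) b := rfl
      rw [this]
      congr 1
      rw [hgb, pow_succ (L b * L a) n, pow_succ' ((L a)⁻¹) n, pow_succ' ((L b)⁻¹) n]
      group
    rw [e2]

include hsd hR in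
lemma even_iff (n : ℕ) :
    R ^ (2 * n) = 1 ↔ ∀ a b : D, ((L b * L a) ^ n * ((L b)⁻¹) ^ n) b = b := by
  constructor
  · intro h a b
    have := key_formula L hsd R hR n a b
    rw [h] at this
    simp only [Equiv.Perm.one_apply] at this
    exact (congrArg Prod.snd this).symm
  · intro h
    have h2 : ∀ a b : D, (R ^ (2 * n)) (a, b) = (((L b * L a) ^ n * ((L a)⁻¹) ^ n) a, b) := by
      intro a b
      rw [key_formula L hsd R hR n a b, h a b]
    ext p
    · obtain ⟨a, b⟩ := p
      have w1 : (R ^ (2 * n + 1)) (a, b) = (b, L b (((L b * L a) ^ n * ((L a)⁻¹) ^ n) a)) := by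
        rw [pow_succ']
        show R ((R ^ (2 * n)) (a, b)) = _
        rw [h2 a b, hR]
      have w2 : (R ^ (2 * n + 1)) (a, b)
          = (((L (L b a) * L b) ^ n * ((L b)⁻¹) ^ n) b, L b a) := by
        rw [pow_succ]
        show (R ^ (2 * n)) (R (a, b)) = _
        rw [hR, h2 b (L b a)]
      have hsnd : L b (((L b * L a) ^ n * ((L a)⁻¹) ^ n) a) = L b a := by
        have := (congrArg Prod.snd (w1.symm.trans w2))
        simpa using this
      have hfst : ((L b * L a) ^ n * ((L a)⁻¹) ^ n) a = a := (L b).injective hsnd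
      show ((R ^ (2*n)) (a, b)).1 = a
      rw [h2 a b, hfst]
    · obtain ⟨a, b⟩ := p
      show ((R ^ (2*n)) (a, b)).2 = b
      rw [h2 a b]

include hsd hR in
lemma odd_iff (n : ℕ) :
    R ^ (2 * n + 1) = 1 ↔ ∀ a b : D, ((L b * L a) ^ n * ((L b)⁻¹) ^ n) b = a := by
  constructor
  · intro h a b
    have w1 : (R ^ (2 * n + 1)) (a, b)
        = (((L b * L a) ^ n * ((L b)⁻¹) ^ n) b,
           L (((L b * L a) ^ n * ((L b)⁻¹) ^ n) b) (((L b * L a) ^ n * ((L a)⁻¹) ^ n) a)) := by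
      rw [pow_succ']
      show R ((R ^ (2 * n)) (a, b)) = _
      rw [key_formula L hsd R hR n a b, hR]
    rw [h] at w1
    simp only [Equiv.Perm.one_apply] at w1
    exact (congrArg Prod.fst w1).symm
  · intro h
    ext p
    · obtain ⟨a, b⟩ := p
      have w1 : (R ^ (2 * n + 1)) (a, b)
          = (a, L a (((L b * L a) ^ n * ((L a)⁻¹) ^ n) a)) := by
        rw [pow_succ']
        show R ((R ^ (2 * n)) (a, b)) = _
        rw [key_formula L hsd R hR n a b, h a b, hR]
      have w2 : (R ^ (2 * n + 1)) (a, b)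
          = (((L (L b a) * L b) ^ n * ((L b)⁻¹) ^ n) b, b) := by
        rw [pow_succ]
        show (R ^ (2 * n)) (R (a, b)) = _
        rw [hR, key_formula L hsd R hR n b (L b a), h b (L b a)]
      show ((R ^ (2*n+1)) (a, b)).1 = a
      rw [w1]
    · obtain ⟨a, b⟩ := p
      have w1 : (R ^ (2 * n + 1)) (a, b)
          = (a, L a (((L b * L a) ^ n * ((L a)⁻¹) ^ n) a)) := by
        rw [pow_succ']
        show R ((R ^ (2 * n)) (a, b)) = _
        rw [key_formula L hsd R hR n a b, h a b, hR]
      have w2 : (R ^ (2 * n + 1)) (a, b)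
          = (((L (L b a) * L b) ^ n * ((L b)⁻¹) ^ n) b, b) := by
        rw [pow_succ]
        show (R ^ (2 * n)) (R (a, b)) = _
        rw [hR, key_formula L hsd R hR n b (L b a), h b (L b a)]
      show ((R ^ (2*n+1)) (a, b)).2 = b
      rw [w2]

include hsd hR in
lemma quandle_of_odd_pow {n : ℕ} (h : R ^ (2 * n + 1) = 1) : ∀ c : D, L c c = c := by
  intro c
  have hq := (odd_iff L hsd R hR n).1 h
  have hLL : L (L c c) = L c := by
    rw [lconj_base L hsd c c]; group
  have e : (L c * L c) ^ n * ((L c)⁻¹) ^ n = (L c) ^ n := by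
    rw [← sq, ← pow_mul, inv_pow, two_mul, pow_add, mul_assoc]
    simp
  have e1 : ((L c) ^ n) c = c := by have := hq c c; rwa [e] at this
  have e2 : ((L c) ^ n) c = L c c := by
    have := hq (L c c) c
    rwa [hLL, e] at this
  rw [← e2, e1]

end Key

section Main
variable {D : Type*} (L : D → Equiv.Perm D)
  (hsd : ∀ a b c : D, L a (L b c) = L (L a b) (L a c))
  (R : Equiv.Perm (D × D)) (hR : ∀ a b : D, R (a, b) = (b, L b a))

include hR in
lemma R_ne_one [Nontrivial D] : R ≠ 1 := by
  obtain ⟨a, b, hab⟩ := exists_pair_ne D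
  intro h
  have h2 := hR a b
  rw [h] at h2
  simp only [Equiv.Perm.one_apply, Prod.mk.injEq] at h2
  exact hab h2.1

lemma enat_sInf_image (T : Set ℕ) (hT : T.Nonempty) :
    sInf ((fun m : ℕ => (m : ℕ∞)) '' T) = ((sInf T : ℕ) : ℕ∞) := by
  apply le_antisymm
  · exact sInf_le ⟨sInf T, Nat.sInf_mem hT, rfl⟩
  · apply le_sInf
    rintro x ⟨m, hm, rfl⟩
    simp only []
    exact_mod_cast Nat.sInf_le hm

end Main

/-- Let `(D, ▷)` be a rack with `|D| > 1`, encoded by its left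
multiplication permutations `L a` (so `a ▷ b = L a b`), and let `R` be its derived solution
`R(a,b) = (b, b ▷ a)`, viewed as a permutation of `D × D`.  With
`M_D = inf {n ≥ 1 | ∀ a b, (L_b L_a)^n L_b^{-n} b = a}` and
`N_D = inf {n ≥ 1 | ∀ a b, (L_b L_a)^n L_b^{-n} b = b}` (computed in `ℕ∞`, so `inf ∅ = ⊤`):
(1) if `(D,▷)` is not a quandle, `R` has finite order iff `N_D` is finite, in which case
`o(R) = 2 N_D`; (2) if `(D,▷)` is a quandle, `R` has finite order iff `min M_D N_D` is
finite, with `o(R) = 2 M_D + 1` whenever `M_D < N_D` and `o(R) = 2 N_D` whenever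
`N_D < M_D`. -/
theorem rack_derived_solution_order {D : Type*} [Nontrivial D] (L : D → Equiv.Perm D)
    (hsd : ∀ a b c : D, L a (L b c) = L (L a b) (L a c))
    (R : Equiv.Perm (D × D)) (hR : ∀ a b : D, R (a, b) = (b, L b a))
    (MD ND : ℕ∞)
    (hMD : MD = sInf {n : ℕ∞ | ∃ m : ℕ, n = (m : ℕ∞) ∧ 1 ≤ m ∧
      ∀ a b : D, ((L b * L a) ^ m * ((L b)⁻¹) ^ m) b = a})
    (hND : ND = sInf {n : ℕ∞ | ∃ m : ℕ, n = (m : ℕ∞) ∧ 1 ≤ m ∧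
      ∀ a b : D, ((L b * L a) ^ m * ((L b)⁻¹) ^ m) b = b}) :
    (¬ (∀ a : D, L a a = a) →
      (IsOfFinOrder R ↔ ND ≠ ⊤) ∧ (ND ≠ ⊤ → (orderOf R : ℕ∞) = 2 * ND)) ∧
    ((∀ a : D, L a a = a) →
      (IsOfFinOrder R ↔ min MD ND ≠ ⊤) ∧
      (MD < ND → (orderOf R : ℕ∞) = 2 * MD + 1) ∧
      (ND < MD → (orderOf R : ℕ∞) = 2 * ND)) := by
  classical
  set TN : Set ℕ := {m : ℕ | 1 ≤ m ∧ ∀ a b : D, ((L b * L a) ^ m * ((L b)⁻¹) ^ m) b = b}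
    with hTNdef
  set TM : Set ℕ := {m : ℕ | 1 ≤ m ∧ ∀ a b : D, ((L b * L a) ^ m * ((L b)⁻¹) ^ m) b = a}
    with hTMdef
  have hsetN : {n : ℕ∞ | ∃ m : ℕ, n = (m : ℕ∞) ∧ 1 ≤ m ∧
      ∀ a b : D, ((L b * L a) ^ m * ((L b)⁻¹) ^ m) b = b} = (fun m : ℕ => (m : ℕ∞)) '' TN := by
    ext n
    constructor
    · rintro ⟨m, rfl, h1, h2⟩; exact ⟨m, ⟨h1, h2⟩, rfl⟩
    · rintro ⟨m, ⟨h1, h2⟩, rfl⟩; exact ⟨m, rfl, h1, h2⟩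
  have hsetM : {n : ℕ∞ | ∃ m : ℕ, n = (m : ℕ∞) ∧ 1 ≤ m ∧
      ∀ a b : D, ((L b * L a) ^ m * ((L b)⁻¹) ^ m) b = a} = (fun m : ℕ => (m : ℕ∞)) '' TM := by
    ext n
    constructor
    · rintro ⟨m, rfl, h1, h2⟩; exact ⟨m, ⟨h1, h2⟩, rfl⟩
    · rintro ⟨m, ⟨h1, h2⟩, rfl⟩; exact ⟨m, rfl, h1, h2⟩
  rw [hsetN] at hND
  rw [hsetM] at hMD
  -- basic facts
  have hRne : R ≠ 1 := R_ne_one L R hR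
  have hdne1 : orderOf R ≠ 1 := fun h => hRne (orderOf_eq_one_iff.1 h)
  have hND_val : TN.Nonempty → ND = ((sInf TN : ℕ) : ℕ∞) := fun h =>
    hND.trans (enat_sInf_image TN h)
  have hMD_val : TM.Nonempty → MD = ((sInf TM : ℕ) : ℕ∞) := fun h =>
    hMD.trans (enat_sInf_image TM h)
  have hND_ne : ND ≠ ⊤ ↔ TN.Nonempty := by
    constructor
    · intro h
      by_contra hne
      rw [Set.not_nonempty_iff_eq_empty] at hne
      rw [hND, hne] at h
      simp at h
    · intro h
      rw [hND_val h]
      exact WithTop.coe_ne_top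
  have hMD_ne : MD ≠ ⊤ ↔ TM.Nonempty := by
    constructor
    · intro h
      by_contra hne
      rw [Set.not_nonempty_iff_eq_empty] at hne
      rw [hMD, hne] at h
      simp at h
    · intro h
      rw [hMD_val h]
      exact WithTop.coe_ne_top
  have hMD_le : ∀ m ∈ TM, MD ≤ (m : ℕ∞) := by
    intro m hm
    rw [hMD]
    exact sInf_le ⟨m, hm, rfl⟩
  -- finite order from nonemptiness
  have hfinN : TN.Nonempty → IsOfFinOrder R := by
    rintro ⟨m, hm1, hm2⟩
    exact isOfFinOrder_iff_pow_eq_one.2 ⟨2 * m, by omega, (even_iff L hsd R hR m).2 hm2⟩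
  have hfinM : TM.Nonempty → IsOfFinOrder R := by
    rintro ⟨m, hm1, hm2⟩
    exact isOfFinOrder_iff_pow_eq_one.2 ⟨2 * m + 1, by omega, (odd_iff L hsd R hR m).2 hm2⟩
  -- dichotomy for finite order
  have hdich : IsOfFinOrder R →
      (∃ m ∈ TN, orderOf R = 2 * m) ∨
      (∃ m ∈ TM, orderOf R = 2 * m + 1 ∧ ∀ c : D, L c c = c) := by
    intro hf
    have hd0 : orderOf R ≠ 0 := hf.orderOf_pos.ne'
    have hd : R ^ orderOf R = 1 := pow_orderOf_eq_one R
    rcases Nat.even_or_odd (orderOf R) with he | ho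
    · obtain ⟨m, hm⟩ := he
      have hm2 : orderOf R = 2 * m := by omega
      rw [hm2] at hd
      exact Or.inl ⟨m, ⟨by omega, (even_iff L hsd R hR m).1 hd⟩, hm2⟩
    · obtain ⟨j, hj⟩ := ho
      rw [hj] at hd
      have hq := (odd_iff L hsd R hR j).1 hd
      have hj1 : 1 ≤ j := by omega
      exact Or.inr ⟨j, ⟨hj1, hq⟩, hj, quandle_of_odd_pow L hsd R hR hd⟩
  -- odd order determination
  have hord_odd : TM.Nonempty → orderOf R = 2 * sInf TM + 1 := by
    intro hTM
    obtain ⟨hm1, hm2⟩ := Nat.sInf_mem hTM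
    have h1 : R ^ (2 * sInf TM + 1) = 1 := (odd_iff L hsd R hR _).2 hm2
    have hdvd : orderOf R ∣ 2 * sInf TM + 1 := orderOf_dvd_of_pow_eq_one h1
    have hle : orderOf R ≤ 2 * sInf TM + 1 := Nat.le_of_dvd (by omega) hdvd
    rcases Nat.even_or_odd (orderOf R) with he | ho
    · obtain ⟨k, hk⟩ := he
      obtain ⟨t, ht⟩ := hdvd
      have : 2 * sInf TM + 1 = 2 * (k * t) := by rw [ht, hk]; ring
      omega
    · obtain ⟨j, hj⟩ := ho
      have hd : R ^ (2 * j + 1) = 1 := by rw [← hj]; exact pow_orderOf_eq_one R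
      have hq := (odd_iff L hsd R hR j).1 hd
      have hj1 : 1 ≤ j := by omega
      have : sInf TM ≤ j := Nat.sInf_le ⟨hj1, hq⟩
      omega
  -- even order determination
  have hord_even : TN.Nonempty → (∀ j ∈ TM, sInf TN ≤ j) → orderOf R = 2 * sInf TN := by
    intro hTN hside
    obtain ⟨hn1, hn2⟩ := Nat.sInf_mem hTN
    have h1 : R ^ (2 * sInf TN) = 1 := (even_iff L hsd R hR _).2 hn2
    have hdvd : orderOf R ∣ 2 * sInf TN := orderOf_dvd_of_pow_eq_one h1
    have hle : orderOf R ≤ 2 * sInf TN := Nat.le_of_dvd (by omega) hdvd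
    have hd0 : orderOf R ≠ 0 := by
      intro h
      rw [h] at hdvd
      have := Nat.eq_zero_of_zero_dvd hdvd
      omega
    rcases Nat.even_or_odd (orderOf R) with he | ho
    · obtain ⟨m, hm⟩ := he
      have hm2 : orderOf R = 2 * m := by omega
      have hd : R ^ (2 * m) = 1 := by rw [← hm2]; exact pow_orderOf_eq_one R
      have hp := (even_iff L hsd R hR m).1 hd
      have : sInf TN ≤ m := Nat.sInf_le ⟨by omega, hp⟩
      omega
    · obtain ⟨j, hj⟩ := ho
      exfalso
      have hd : R ^ (2 * j + 1) = 1 := by rw [← hj]; exact pow_orderOf_eq_one R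
      have hq := (odd_iff L hsd R hR j).1 hd
      have hj1 : 1 ≤ j := by omega
      have hjTM : j ∈ TM := ⟨hj1, hq⟩
      have h2 : sInf TN ≤ j := hside j hjTM
      -- orderOf R odd and divides 2 * sInf TN ⟹ orderOf R ∣ sInf TN
      obtain ⟨t, ht⟩ := hdvd
      rcases Nat.even_or_odd t with hte | hto
      · obtain ⟨s, hs⟩ := hte
        have hns : sInf TN = (2 * j + 1) * s := by
          have : 2 * sInf TN = 2 * ((2 * j + 1) * s) := by rw [ht, hj, hs]; ring
          omega
        have hs1 : 1 ≤ s := by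
          rcases Nat.eq_zero_or_pos s with h | h
          · rw [h] at hns; omega
          · exact h
        nlinarith [hns, hs1, hj1]
      · obtain ⟨u, hu⟩ := hto
        have : 2 * sInf TN = 2 * (2 * j * u + j + u) + 1 := by rw [ht, hj, hu]; ring
        omega
  -- assemble
  constructor
  · -- non-quandle case
    intro hnq
    have hTMempty : TM = ∅ := by
      rw [Set.eq_empty_iff_forall_notMem]
      rintro m ⟨hm1, hm2⟩
      exact hnq (quandle_of_odd_pow L hsd R hR ((odd_iff L hsd R hR m).2 hm2))
    constructor
    · constructor
      · intro hf
        rcases hdich hf with ⟨m, hm, _⟩ | ⟨m, hm, _⟩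
        · exact hND_ne.2 ⟨m, hm⟩
        · rw [hTMempty] at hm; exact absurd hm (Set.notMem_empty m)
      · intro h
        exact hfinN (hND_ne.1 h)
    · intro h
      have hTN := hND_ne.1 h
      have := hord_even hTN (by intro j hj; rw [hTMempty] at hj; exact absurd hj (Set.notMem_empty j))
      rw [this, hND_val hTN]
      push_cast
      ring
  · -- quandle case
    intro _
    refine ⟨⟨?_, ?_⟩, ?_, ?_⟩
    · intro hf
      rcases hdich hf with ⟨m, hm, _⟩ | ⟨m, hm, _⟩
      · have := hND_ne.2 ⟨m, hm⟩
        simp [min_eq_top, this]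
      · have := hMD_ne.2 ⟨m, hm⟩
        simp [min_eq_top, this]
    · intro h
      rw [ne_eq, min_eq_top, not_and_or] at h
      rcases h with h | h
      · exact hfinM (hMD_ne.1 h)
      · exact hfinN (hND_ne.1 h)
    · intro hlt
      have hTM := hMD_ne.1 (ne_top_of_lt hlt)
      rw [hord_odd hTM, hMD_val hTM]
      push_cast
      ring
    · intro hlt
      have hTN := hND_ne.1 (ne_top_of_lt hlt)
      have hside : ∀ j ∈ TM, sInf TN ≤ j := by
        intro j hj
        have h1 : MD ≤ (j : ℕ∞) := hMD_le j hj
        have h2 : ((sInf TN : ℕ) : ℕ∞) < MD := by rw [← hND_val hTN]; exact hlt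
        have : ((sInf TN : ℕ) : ℕ∞) < (j : ℕ∞) := lt_of_lt_of_le h2 h1
        exact_mod_cast this.le
      rw [hord_even hTN hside, hND_val hTN]
      push_cast
      ring
end

section
/- Let (D,⊢,⊣,∘) be a di-skew brace with a fixed bar-unit 0 ∈ E(D). Then for all a ∈ D one has g_{m_a} = g_a and m_{g_a} = m_a, where a = g_a ⊢ e_a is the additive decomposition and a = m_a ∘ u_a is the multiplicative decomposition of a. -/
/-- An element `e` is a *bar-unit* for the pair of operations `(⊢, ⊣)` if
`e ⊢ a = a = a ⊣ e` for all `a`. -/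
def IsBarUnit {D : Type*} (vd dv : D → D → D) (e : D) : Prop :=
  ∀ a : D, vd e a = a ∧ dv a e = a

/-- A generalized digroup (g-digroup): two associative operations `vd` (`⊢`) and `dv` (`⊣`)
satisfying inner associativity and the two bar-side irrelevance laws, admitting at least one
bar-unit, and such that for every element `a` and every bar-unit `e` there is a unique pair
`(I e a, J e a)` with `(I e a) ⊣ a = e = a ⊢ (J e a)`. -/
structure GDigroup (D : Type*) where
  vd : D → D → D
  dv : D → D → D
  vd_assoc : ∀ a b c : D, vd (vd a b) c = vd a (vd b c)
  dv_assoc : ∀ a b c : D, dv (dv a b) c = dv a (dv b c)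
  inner_assoc : ∀ a b c : D, dv (vd a b) c = vd a (dv b c)
  bar_right : ∀ a b c : D, dv a (vd b c) = dv a (dv b c)
  bar_left : ∀ a b c : D, vd (vd a b) c = vd (dv a b) c
  exists_barUnit : ∃ e : D, IsBarUnit vd dv e
  I : D → D → D
  J : D → D → D
  I_spec : ∀ e a : D, IsBarUnit vd dv e → dv (I e a) a = e
  J_spec : ∀ e a : D, IsBarUnit vd dv e → vd a (J e a) = e
  I_unique : ∀ e a x : D, IsBarUnit vd dv e → dv x a = e → x = I e a
  J_unique : ∀ e a y : D, IsBarUnit vd dv e → vd a y = e → y = J e a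
/-- A (left) di-skew brace: the additive structure `(D, ⊢, ⊣)` is a g-digroup, the
multiplicative structure `(D, ∘)` is a right group (an associative operation such that for
all `a b` there is a unique `x` with `a ∘ x = b`), and the compatibility laws
`a ∘ (b ⊢ c) = a ∘ b ⊢ a⁻¹ ⊢ a ∘ c`, `a ∘ (b ⊣ c) = a ∘ b ⊣ a⁻¹ ⊣ a ∘ c` and
`(a ⊢ b) ∘ c = (a ⊣ b) ∘ c` hold, where `a⁻¹ ⊢ x` means `(I e a) ⊢ x` and `x ⊣ a⁻¹` means
`x ⊣ (J e a)` for any bar-unit `e`. -/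
structure DiSkewBrace (D : Type*) extends GDigroup D where
  circ : D → D → D
  circ_assoc : ∀ a b c : D, circ (circ a b) c = circ a (circ b c)
  circ_rightGroup : ∀ a b : D, ∃! x : D, circ a x = b
  d1 : ∀ e : D, IsBarUnit vd dv e →
    ∀ a b c : D, circ a (vd b c) = vd (circ a b) (vd (I e a) (circ a c))
  d2 : ∀ e : D, IsBarUnit vd dv e →
    ∀ a b c : D, circ a (dv b c) = dv (dv (circ a b) (J e a)) (circ a c)
  d3 : ∀ a b c : D, circ (vd a b) c = circ (dv a b) c

/-!
Both decompositions are forced: `g_a = a ⊢ 0` and `m_a = a ∘ 0`. Then `m_{g_a} = (a ⊢ 0) ∘ 0 =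
(a ⊣ 0) ∘ 0 = a ∘ 0` by the third brace axiom, while the first one with `b = c = 0` gives
`a ∘ 0 = (a ∘ 0) ⊢ s` for `s = a⁻¹ ⊢ a ∘ 0`, which forces `s = (a ∘ 0)⁻¹ ⊢ a ∘ 0`, a bar-unit; hence
`a ∘ 0 = a ⊢ s` and `g_{m_a} = (a ⊢ s) ⊢ 0 = a ⊢ 0 = g_a`.
-/

namespace GDigroup

variable {D : Type*} (G : GDigroup D) {e : D}

theorem I_vd_vd_cancel (he : IsBarUnit G.vd G.dv e) (t x : D) :
    G.vd (G.I e t) (G.vd t x) = x := by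
  rw [← G.vd_assoc, G.bar_left, G.I_spec e t he, (he x).1]

theorem vd_J_vd_cancel (he : IsBarUnit G.vd G.dv e) (t x : D) :
    G.vd t (G.vd (G.J e t) x) = x := by
  rw [← G.vd_assoc, G.J_spec e t he, (he x).1]

theorem vd_I_vd_cancel (he : IsBarUnit G.vd G.dv e) (t x : D) :
    G.vd t (G.vd (G.I e t) x) = x :=
  calc G.vd t (G.vd (G.I e t) x)
      = G.vd t (G.vd (G.I e t) (G.vd t (G.vd (G.J e t) x))) := by
        rw [G.vd_J_vd_cancel he]
    _ = x := by rw [G.I_vd_vd_cancel he, G.vd_J_vd_cancel he]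

theorem I_self (he : IsBarUnit G.vd G.dv e) : G.I e e = e :=
  (G.I_unique e e e he (he e).2).symm

theorem isBarUnit_I_vd (he : IsBarUnit G.vd G.dv e) (t : D) :
    IsBarUnit G.vd G.dv (G.vd (G.I e t) t) := fun x =>
  ⟨by rw [G.bar_left, G.I_spec e t he, (he x).1],
    by rw [G.bar_right, G.I_spec e t he, (he x).2]⟩

theorem isBarUnit_of_vd_eq_self (he : IsBarUnit G.vd G.dv e) {t s : D} (h : G.vd t s = t) :
    IsBarUnit G.vd G.dv s := by
  have hs : s = G.vd (G.I e t) t :=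
    calc s = G.vd (G.I e t) (G.vd t s) := (G.I_vd_vd_cancel he t s).symm
      _ = G.vd (G.I e t) t := by rw [h]
  exact hs ▸ G.isBarUnit_I_vd he t

theorem eq_vd_barUnit_of_vd_eq {e' a x g : D} (he : IsBarUnit G.vd G.dv e)
    (he' : IsBarUnit G.vd G.dv e') (hg : g = G.vd x e) (ha : G.vd g e' = a) :
    g = G.vd a e := by
  rw [← ha, G.vd_assoc, (he' e).1, hg, G.vd_assoc, (he e).1]

end GDigroup

namespace DiSkewBrace

variable {D : Type*} (S : DiSkewBrace D) {e : D}

theorem isBarUnit_I_vd_circ (he : IsBarUnit S.vd S.dv e) (b : D) :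
    IsBarUnit S.vd S.dv (S.vd (S.I e b) (S.circ b e)) := by
  refine S.isBarUnit_of_vd_eq_self he (t := S.circ b e) ?_
  have h := S.d1 e he b e e
  rw [(he e).1] at h
  exact h.symm

theorem vd_circ_barUnit (he : IsBarUnit S.vd S.dv e) (b : D) :
    S.vd (S.circ b e) e = S.vd b e := by
  conv_lhs => rw [← S.vd_I_vd_cancel he b (S.circ b e)]
  rw [S.vd_assoc, (S.isBarUnit_I_vd_circ he b e).1]

theorem circ_congr_barUnit {e' : D} (he : IsBarUnit S.vd S.dv e)
    (he' : IsBarUnit S.vd S.dv e') (c : D) : S.circ e c = S.circ e' c :=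
  calc S.circ e c = S.circ (S.vd e' e) c := by rw [(he' e).1]
    _ = S.circ (S.dv e' e) c := S.d3 e' e c
    _ = S.circ e' c := by rw [(he e').2]

theorem isBarUnit_circ_self (he : IsBarUnit S.vd S.dv e) :
    IsBarUnit S.vd S.dv (S.circ e e) := by
  have h := S.isBarUnit_I_vd_circ he e
  rwa [S.I_self he, (he _).1] at h

theorem barUnit_circ (he : IsBarUnit S.vd S.dv e) (c : D) : S.circ e c = c := by
  obtain ⟨x, -, hx⟩ := S.circ_rightGroup e (S.circ e c)
  have h : S.circ e (S.circ e c) = S.circ e c := by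
    rw [← S.circ_assoc, S.circ_congr_barUnit (S.isBarUnit_circ_self he) he]
  exact (hx _ h).trans (hx c rfl).symm

theorem eq_circ_barUnit_of_circ_eq {e' a x m : D} (he : IsBarUnit S.vd S.dv e)
    (he' : IsBarUnit S.vd S.dv e') (hm : m = S.circ x e) (ha : S.circ m e' = a) :
    m = S.circ a e := by
  rw [← ha, S.circ_assoc, S.barUnit_circ he', hm, S.circ_assoc, S.barUnit_circ he]

end DiSkewBrace

/-- Let `(D, ⊢, ⊣, ∘)` be a di-skew brace with a fixed bar-unit `z`.
Let `a = g_a ⊢ e_a` be the additive decomposition (with `g_a ∈ G = D ⊢ z` and `e_a` a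
bar-unit) and `a = m_a ∘ u_a` the multiplicative decomposition (with `m_a ∈ M = D ∘ z` and
`u_a` an idempotent/bar-unit).  Then `g_{m_a} = g_a` and `m_{g_a} = m_a` for all `a`. -/
theorem diSkewBrace_decomposition_compat {D : Type*} (S : DiSkewBrace D)
    (z : D) (hz : IsBarUnit S.vd S.dv z)
    (g ea m u : D → D)
    (hgG : ∀ a : D, ∃ x : D, g a = S.vd x z)
    (heaE : ∀ a : D, IsBarUnit S.vd S.dv (ea a))
    (hadd : ∀ a : D, S.vd (g a) (ea a) = a)
    (hmM : ∀ a : D, ∃ x : D, m a = S.circ x z)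
    (huE : ∀ a : D, IsBarUnit S.vd S.dv (u a))
    (hmul : ∀ a : D, S.circ (m a) (u a) = a) :
    ∀ a : D, g (m a) = g a ∧ m (g a) = m a := by
  have hg (b : D) : g b = S.vd b z := by
    obtain ⟨x, hx⟩ := hgG b
    exact S.eq_vd_barUnit_of_vd_eq hz (heaE b) hx (hadd b)
  have hm (b : D) : m b = S.circ b z := by
    obtain ⟨x, hx⟩ := hmM b
    exact S.eq_circ_barUnit_of_circ_eq hz (huE b) hx (hmul b)
  intro a
  constructor
  · rw [hg, hm, S.vd_circ_barUnit hz, hg]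
  · rw [hm, hg, S.d3, (hz a).2, hm]
end
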